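/- Let θ₀ be a nonconstant singular inner function and let ω be the singular inner function with ω² = θ₀ (associated to half the singular measure). Set α := conj(ω(0)), so 0 < |α| < 1. Then ω − 1/α belongs to H^2 ⊖ θ₀H^2, and ω − 1/α is an outer function invertible in H^∞. -/

import Mathlib

open MeasureTheory Complex Submodule
noncomputable section
instance fact2pi : Fact (0 < 2 * Real.pi) := ⟨by positivity⟩
instance factTop1 : Fact ((1:ENNReal) ≤ (⊤:ENNReal)) := ⟨le_top⟩
/-- the circle group -/
abbrev Tc := AddCircle (2 * Real.pi)
/-- normalized Haar measure on the circle -/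
abbrev muh : Measure Tc := AddCircle.haarAddCircle
/-- L² of the circle -/
abbrev L2 := Lp ℂ 2 muh
/-- L^∞ of the circle -/
abbrev Linf := Lp ℂ ⊤ muh

/-- The Hardy space `H²` as a closed subspace of `L²` of the circle. -/
def H2 : Submodule ℂ L2 :=
  (span ℂ (Set.range fun n : ℕ => (fourierLp 2 (n : ℤ) : L2))).topologicalClosure

theorem isClosed_H2 : IsClosed (H2 : Set L2) := Submodule.isClosed_topologicalClosure _
instance : CompleteSpace H2 := IsClosed.completeSpace_coe (hs := isClosed_H2)

theorem memLp2_mul (φ : Linf) (g : L2) :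
    MemLp ((φ : Tc → ℂ) • (g : Tc → ℂ)) 2 muh :=
  MemLp.smul (Lp.memLp g) (Lp.memLp φ)

/-- multiplication of an `L∞` function and an `L²` function, as an element of `L²`. -/
def mulL2 (φ : Linf) (g : L2) : L2 := (memLp2_mul φ g).toLp _

theorem mulL2_add (φ : Linf) (g h : L2) : mulL2 φ (g + h) = mulL2 φ g + mulL2 φ h := by
  simp only [mulL2]
  rw [← MemLp.toLp_add]
  apply MemLp.toLp_congr
  filter_upwards [Lp.coeFn_add g h] with x hx
  simp only [Pi.mul_apply, Pi.smul_apply, smul_eq_mul, hx, Pi.add_apply]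
  ring

theorem mulL2_smul (φ : Linf) (c : ℂ) (g : L2) : mulL2 φ (c • g) = c • mulL2 φ g := by
  simp only [mulL2]
  rw [← MemLp.toLp_const_smul]
  apply MemLp.toLp_congr
  filter_upwards [Lp.coeFn_smul c g] with x hx
  simp only [Pi.mul_apply, Pi.smul_apply, smul_eq_mul, hx]
  ring

theorem mulL2_norm (φ : Linf) (g : L2) : ‖mulL2 φ g‖ ≤ ‖φ‖ * ‖g‖ := by
  rw [mulL2, Lp.norm_toLp]
  have h : eLpNorm ((φ : Tc → ℂ) • (g : Tc → ℂ)) 2 muh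
      ≤ eLpNorm (φ : Tc → ℂ) ⊤ muh * eLpNorm (g : Tc → ℂ) 2 muh :=
    eLpNorm_smul_le_mul_eLpNorm (Lp.aestronglyMeasurable g) (Lp.aestronglyMeasurable φ)
  calc (eLpNorm ((φ : Tc → ℂ) • (g : Tc → ℂ)) 2 muh).toReal
      ≤ (eLpNorm (φ : Tc → ℂ) ⊤ muh * eLpNorm (g : Tc → ℂ) 2 muh).toReal := by
        apply ENNReal.toReal_mono
        · exact ENNReal.mul_ne_top (Lp.eLpNorm_ne_top φ) (Lp.eLpNorm_ne_top g)
        · exact h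
    _ = ‖φ‖ * ‖g‖ := by
        rw [ENNReal.toReal_mul, Lp.norm_def, Lp.norm_def]

/-- Multiplication by an `L^∞` function as a continuous linear operator on `L²`. -/
def Mmul (φ : Linf) : L2 →L[ℂ] L2 :=
  LinearMap.mkContinuous
    { toFun := mulL2 φ
      map_add' := mulL2_add φ
      map_smul' := mulL2_smul φ } ‖φ‖ (mulL2_norm φ)

/-- the orthogonal projection `P : L² → H²`. -/
abbrev P2 : L2 →L[ℂ] ↥H2 := orthogonalProjection H2

/-- The Toeplitz operator with symbol `φ ∈ L^∞`, acting on `H²`: `T_φ g = P (φ g)`. -/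
def Toep (φ : Linf) : ↥H2 →L[ℂ] ↥H2 := P2 ∘L (Mmul φ) ∘L H2.subtypeL

/-- The Toeplitz operator, viewed as a map `L² → L²` (useful to avoid coercions). -/
def TopL (φ : Linf) : L2 →L[ℂ] L2 := H2.subtypeL ∘L P2 ∘L Mmul φ

theorem memLpTop_mul (φ ψ : Linf) : MemLp ((φ : Tc → ℂ) • (ψ : Tc → ℂ)) ⊤ muh :=
  MemLp.smul (Lp.memLp ψ) (Lp.memLp φ)

/-- `L^∞` is closed under products; we register this as a `Mul` instance. -/
instance : Mul Linf := ⟨fun φ ψ => (memLpTop_mul φ ψ).toLp _⟩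

/-- the constant function `1` in `L^∞`. -/
instance : One Linf := ⟨(memLp_top_const (1 : ℂ)).toLp _⟩

/-- the embedding of `L^∞` into `L²` (the measure is finite). -/
def toL2 (φ : Linf) : L2 := ((Lp.memLp φ).mono_exponent le_top).toLp _

/-- `H^∞`: the essentially bounded functions lying in the Hardy space. -/
def Hinf : Set Linf := {φ | toL2 φ ∈ H2}

/-- pointwise complex conjugation on `L²`. -/
def conjL2 (f : L2) : L2 :=
  ((Complex.conjCLE.toContinuousLinearMap).comp_memLp' (Lp.memLp f)).toLp _

/-- pointwise complex conjugation on `L^∞`. -/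
def conjLinf (φ : Linf) : Linf :=
  ((Complex.conjCLE.toContinuousLinearMap).comp_memLp' (Lp.memLp φ)).toLp _

/-- composition with `z ↦ z⁻¹` (i.e. `x ↦ -x` on the additive circle) on `L²`. -/
def compNegL2 : L2 →ₗᵢ[ℂ] L2 :=
  Lp.compMeasurePreservingₗᵢ ℂ (fun x : Tc => -x) (Measure.measurePreserving_neg muh)

/-- composition with `z ↦ z⁻¹` on `L^∞`. -/
def compNegLinf (φ : Linf) : Linf :=
  Lp.compMeasurePreserving (fun x : Tc => -x) (Measure.measurePreserving_neg muh) φ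

/-- `φ̃(z) = conj (φ (z̄))`. -/
def tildeL (φ : Linf) : Linf := conjLinf (compNegLinf φ)

/-- `f̃(z) = conj (f (z̄))` on `L²`. -/
def tilde2 (f : L2) : L2 := conjL2 (compNegL2 f)

/-- the unitary `J` on `L²`: `(J f)(z) = z̄ f(z̄)`. -/
def Jop : L2 →L[ℂ] L2 := (Mmul (fourierLp ⊤ (-1))) ∘L compNegL2.toContinuousLinearMap

/-- the projection onto `(H²)^⊥`. -/
def PperpL : L2 →L[ℂ] L2 := ContinuousLinearMap.id ℂ L2 - H2.subtypeL ∘L P2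

/-- The Hankel operator with symbol `φ`: `H_φ g = J P^⊥ (φ g)`. -/
def Hank (φ : Linf) : ↥H2 →L[ℂ] L2 := Jop ∘L PperpL ∘L (Mmul φ) ∘L H2.subtypeL

/-- the self-commutator `[T^*, T] = T^*T - TT^*`. -/
def selfCommOp {H : Type*} [NormedAddCommGroup H] [InnerProductSpace ℂ H] [CompleteSpace H]
    (T : H →L[ℂ] H) : H →L[ℂ] H :=
  ContinuousLinearMap.adjoint T ∘L T - T ∘L ContinuousLinearMap.adjoint T

/-- hyponormality of a Hilbert-space operator. -/
def IsHyponormalOp {H : Type*} [NormedAddCommGroup H] [InnerProductSpace ℂ H] [CompleteSpace H]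
    (T : H →L[ℂ] H) : Prop := (selfCommOp T).IsPositive

/-- normality of a Hilbert-space operator. -/
def IsNormalOp {H : Type*} [NormedAddCommGroup H] [InnerProductSpace ℂ H] [CompleteSpace H]
    (T : H →L[ℂ] H) : Prop := selfCommOp T = 0

/-- finite rank operator. -/
def FiniteRankOp {H : Type*} [NormedAddCommGroup H] [InnerProductSpace ℂ H]
    (T : H →L[ℂ] H) : Prop := FiniteDimensional ℂ ↥(LinearMap.range (T : H →ₗ[ℂ] H))

/-- `φ` is of bounded type: a quotient of two `H^∞` functions. -/
def BoundedType (φ : Linf) : Prop :=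
  ∃ ψ₁ ψ₂ : Linf, ψ₁ ∈ Hinf ∧ ψ₂ ∈ Hinf ∧ (∀ᵐ x ∂muh, (ψ₂ : Tc → ℂ) x ≠ 0) ∧
    (∀ᵐ x ∂muh, (φ : Tc → ℂ) x = (ψ₁ : Tc → ℂ) x / (ψ₂ : Tc → ℂ) x)

/-- scalar inner function. -/
def IsInner (θ : Linf) : Prop := θ ∈ Hinf ∧ ∀ᵐ x ∂muh, ‖(θ : Tc → ℂ) x‖ = 1

/-- constant function in `L^∞`. -/
def IsConstLinf (θ : Linf) : Prop := ∃ c : ℂ, θ = c • (1 : Linf)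

/-- the boundary function `z = e^{ix}` on the circle. -/
def zfun : Tc → ℂ := fun x => fourier 1 x

/-- finite Blaschke product. -/
def IsFiniteBlaschke (θ : Linf) : Prop :=
  ∃ (c : ℂ) (N : ℕ) (α : Fin N → ℂ), ‖c‖ = 1 ∧ (∀ i, ‖α i‖ < 1) ∧
    ∀ᵐ x ∂muh, (θ : Tc → ℂ) x =
      c * ∏ i, (zfun x - α i) / (1 - (starRingEnd ℂ (α i)) * zfun x)

/-- divisibility of inner functions: `θ` divides `θ'`. -/
def InnerDivides (θ θ' : Linf) : Prop := ∃ ω : Linf, IsInner ω ∧ θ' = θ * ω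

/-- evaluation of an `H²` function inside the disk, via its Taylor (Fourier) coefficients. -/
def evalDisk (f : L2) (α : ℂ) : ℂ := ∑' k : ℕ, fourierCoeff (f : Tc → ℂ) (k : ℤ) * α ^ k

/-- the model space `H_θ = H² ⊖ θH²`. -/
def ModelSpace (θ : Linf) : Submodule ℂ L2 := H2 ⊓ (Submodule.map (Mmul θ : L2 →ₗ[ℂ] L2) H2)ᗮ

/-- outer function: the closed span of its (analytic) polynomial multiples is all of `H²`. -/
def IsOuter (h : L2) : Prop :=
  (span ℂ (Set.range fun n : ℕ => mulL2 (fourierLp ⊤ (n : ℤ)) h)).topologicalClosure = H2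

/-- `h` coincides with an `H^∞` function which is invertible in `H^∞`. -/
def InvertibleHinf (h : L2) : Prop :=
  ∃ u v : Linf, toL2 u = h ∧ u ∈ Hinf ∧ v ∈ Hinf ∧ u * v = 1

/-- the set `E(φ)` appearing in Cowen's hyponormality criterion. -/
def Ecal (φ : Linf) : Set Linf :=
  {k | k ∈ Hinf ∧ ‖k‖ ≤ 1 ∧ φ - k * conjLinf φ ∈ Hinf}

theorem isClosed_modelSpace (θ : Linf) : IsClosed ((ModelSpace θ : Set L2)) := by
  rw [ModelSpace, Submodule.coe_inf]
  exact isClosed_H2.inter (Submodule.isClosed_orthogonal _)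

instance (θ : Linf) : CompleteSpace (ModelSpace θ) :=
  IsClosed.completeSpace_coe (hs := isClosed_modelSpace θ)

/-- the orthogonal projection of `L²` onto the model space `H_θ`, as an endomorphism of `L²`. -/
def Pmodel (θ : Linf) : L2 →L[ℂ] L2 :=
  (ModelSpace θ).subtypeL ∘L orthogonalProjection (ModelSpace θ)

/-! With `θ₀ = ω²`, `|ω| = 1` and `ω̂(0) = ᾱ`, for `g ∈ H²` both `⟪ω² g, ω⟫ = ⟪ω g, 1⟫` and
`α⁻¹ ⟪ω² g, 1⟫` equal `α · conj ĝ(0)`, so `ω - α⁻¹` is orthogonal to `θ₀ H²`. By Cauchy–Schwarz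
`|α| = |⟪1, ω⟫| ≤ ‖ω‖₂ = 1`, with equality only if `ω` is constant, and `α ≠ 0` since `ω(0) ≠ 0`.
As `|ω| ≤ 1 < |α⁻¹|`, `u = ω - α⁻¹` has a bounded inverse; it is the fixed point of the
contraction `h ↦ α (ω h - 1)` of `L²`, which maps `H²` into itself, so `u⁻¹ ∈ H^∞`. Then
`H² = u (u⁻¹ H²)` lies in the closure of `u · (analytic polynomials)`: `u` is outer. -/

open ComplexConjugate Filter Function
open scoped InnerProductSpace

section FourierCoeff

variable {T : ℝ} [Fact (0 < T)]

theorem fourierCoeff_conj (f : AddCircle T → ℂ) (n : ℤ) :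
    fourierCoeff (fun x => conj (f x)) n = conj (fourierCoeff f (-n)) := by
  simp only [fourierCoeff, ← integral_conj, smul_eq_mul, map_mul, neg_neg, ← fourier_neg]

theorem fourierCoeff_eq_inner (f : Lp ℂ 2 (@AddCircle.haarAddCircle T _)) (n : ℤ) :
    fourierCoeff f n = ⟪fourierLp 2 n, f⟫_ℂ := by
  rw [← fourierBasis_repr, fourierBasis.repr_apply_apply, coe_fourierBasis]

theorem inner_eq_tsum_fourierCoeff (f g : Lp ℂ 2 (@AddCircle.haarAddCircle T _)) :
    ⟪f, g⟫_ℂ = ∑' n : ℤ, conj (fourierCoeff f n) * fourierCoeff g n := by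
  simpa only [fourierCoeff_eq_inner, inner_conj_symm, coe_fourierBasis] using
    (fourierBasis.tsum_inner_mul_inner f g).symm

end FourierCoeff

theorem fourierLp_mem_H2 {n : ℤ} (hn : 0 ≤ n) : (fourierLp 2 n : L2) ∈ H2 :=
  le_topologicalClosure _ (subset_span ⟨n.toNat, by simp [Int.toNat_of_nonneg hn]⟩)

theorem mem_H2_iff {f : L2} : f ∈ H2 ↔ ∀ n < 0, fourierCoeff f n = 0 := by
  refine ⟨fun hf n hn => ?_, fun h => ?_⟩
  · have hle : H2 ≤ (ℂ ∙ (fourierLp 2 n : L2))ᗮ := by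
      refine topologicalClosure_minimal _ ?_ (isClosed_orthogonal _)
      rw [span_le]
      rintro _ ⟨m, rfl⟩
      exact mem_orthogonal_singleton_iff_inner_right.mpr (orthonormal_fourier.2 (by omega))
    rw [fourierCoeff_eq_inner]
    exact mem_orthogonal_singleton_iff_inner_right.mp (hle hf)
  · refine isClosed_H2.mem_of_tendsto (hasSum_fourier_series_L2 f)
      (Eventually.of_forall fun s => sum_mem fun n _ => ?_)
    rcases lt_or_ge n 0 with hn | hn
    · simp [h n hn]
    · exact smul_mem _ _ (fourierLp_mem_H2 hn)

theorem coeFn_toL2 (φ : Linf) : toL2 φ =ᵐ[muh] φ :=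
  MemLp.coeFn_toLp _

theorem coeFn_one_Linf : ((1 : Linf) : Tc → ℂ) =ᵐ[muh] 1 :=
  MemLp.coeFn_toLp _

theorem coeFn_mul_Linf (φ ψ : Linf) : ⇑(φ * ψ) =ᵐ[muh] ⇑φ * ⇑ψ :=
  MemLp.coeFn_toLp _

theorem coeFn_mulL2 (φ : Linf) (g : L2) : mulL2 φ g =ᵐ[muh] ⇑φ * ⇑g :=
  MemLp.coeFn_toLp _

theorem toL2_injective : Injective toL2 := fun φ ψ h =>
  Lp.ext <| (coeFn_toL2 φ).symm.trans <| h ▸ coeFn_toL2 ψ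

theorem toL2_sub (φ ψ : Linf) : toL2 (φ - ψ) = toL2 φ - toL2 ψ := by
  refine Lp.ext ?_
  filter_upwards [coeFn_toL2 (φ - ψ), Lp.coeFn_sub φ ψ, Lp.coeFn_sub (toL2 φ) (toL2 ψ),
    coeFn_toL2 φ, coeFn_toL2 ψ] with x h₁ h₂ h₃ h₄ h₅
  simp only [h₁, h₂, h₃, Pi.sub_apply, h₄, h₅]

theorem toL2_smul (c : ℂ) (φ : Linf) : toL2 (c • φ) = c • toL2 φ := by
  refine Lp.ext ?_
  filter_upwards [coeFn_toL2 (c • φ), Lp.coeFn_smul c φ, Lp.coeFn_smul c (toL2 φ),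
    coeFn_toL2 φ] with x h₁ h₂ h₃ h₄
  simp only [h₁, h₂, h₃, Pi.smul_apply, h₄]

theorem toL2_fourierLp (n : ℤ) : toL2 (fourierLp ⊤ n) = fourierLp 2 n := by
  refine Lp.ext ?_
  filter_upwards [coeFn_toL2 (fourierLp ⊤ n), coeFn_fourierLp ⊤ n, coeFn_fourierLp 2 n]
    with x h₁ h₂ h₃
  rw [h₁, h₂, h₃]

theorem toL2_one : toL2 1 = fourierLp 2 0 := by
  refine Lp.ext ?_
  filter_upwards [coeFn_toL2 1, coeFn_one_Linf, coeFn_fourierLp 2 0] with x h₁ h₂ h₃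
  rw [h₁, h₂, h₃, fourier_zero, Pi.one_apply]

theorem one_mem_Hinf : (1 : Linf) ∈ Hinf :=
  show toL2 1 ∈ H2 from toL2_one ▸ fourierLp_mem_H2 le_rfl

theorem fourierLp_top_mem_Hinf (n : ℕ) : (fourierLp ⊤ (n : ℤ) : Linf) ∈ Hinf :=
  show toL2 _ ∈ H2 from toL2_fourierLp (n : ℤ) ▸ fourierLp_mem_H2 (Int.natCast_nonneg n)

theorem mulL2_mul (φ ψ : Linf) (g : L2) : mulL2 (φ * ψ) g = mulL2 φ (mulL2 ψ g) := by
  refine Lp.ext ?_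
  filter_upwards [coeFn_mulL2 (φ * ψ) g, coeFn_mul_Linf φ ψ, coeFn_mulL2 φ (mulL2 ψ g),
    coeFn_mulL2 ψ g] with x h₁ h₂ h₃ h₄
  simp only [h₁, h₂, h₃, h₄, Pi.mul_apply, mul_assoc]

theorem mulL2_toL2_one (φ : Linf) : mulL2 φ (toL2 1) = toL2 φ := by
  refine Lp.ext ?_
  filter_upwards [coeFn_mulL2 φ (toL2 1), coeFn_toL2 1, coeFn_one_Linf, coeFn_toL2 φ]
    with x h₁ h₂ h₃ h₄
  simp only [h₁, h₂, h₃, h₄, Pi.mul_apply, Pi.one_apply, mul_one]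

theorem mulL2_fourierLp (φ : Linf) (n : ℤ) :
    mulL2 φ (fourierLp 2 n) = mulL2 (fourierLp ⊤ n) (toL2 φ) := by
  refine Lp.ext ?_
  filter_upwards [coeFn_mulL2 φ (fourierLp 2 n), coeFn_mulL2 (fourierLp ⊤ n) (toL2 φ),
    coeFn_fourierLp 2 n, coeFn_fourierLp ⊤ n, coeFn_toL2 φ] with x h₁ h₂ h₃ h₄ h₅
  simp only [h₁, h₂, h₃, h₄, h₅, Pi.mul_apply, mul_comm]

theorem mulL2_eq_self_of_mul_eq_one {u w : Linf} (huw : u * w = 1) (f : L2) :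
    mulL2 u (mulL2 w f) = f := by
  refine Lp.ext ?_
  filter_upwards [coeFn_mulL2 u (mulL2 w f), coeFn_mulL2 w f, coeFn_mul_Linf u w,
    huw ▸ coeFn_one_Linf] with x h₁ h₂ h₃ h₄
  have h₅ : u x * w x = 1 := by simpa [h₃] using h₄
  simp only [h₁, h₂, Pi.mul_apply, ← mul_assoc, h₅, one_mul]

theorem inner_toL2_one (f : L2) : ⟪f, toL2 1⟫_ℂ = conj (fourierCoeff f 0) := by
  rw [toL2_one, fourierCoeff_eq_inner, inner_conj_symm]

theorem coeFn_conjLinf (φ : Linf) : conjLinf φ =ᵐ[muh] fun x => conj (φ x) :=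
  MemLp.coeFn_toLp _

theorem fourierCoeff_toL2_conjLinf (φ : Linf) (n : ℤ) :
    fourierCoeff (toL2 (conjLinf φ)) n = conj (fourierCoeff (toL2 φ) (-n)) := by
  rw [fourierCoeff_congr_ae ((coeFn_toL2 _).trans (coeFn_conjLinf φ)), fourierCoeff_conj,
    fourierCoeff_congr_ae (coeFn_toL2 φ)]

theorem inner_mulL2_right (φ : Linf) (f g : L2) :
    ⟪f, mulL2 φ g⟫_ℂ = ⟪mulL2 (conjLinf φ) f, g⟫_ℂ := by
  simp only [L2.inner_def]
  refine integral_congr_ae ?_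
  filter_upwards [coeFn_mulL2 φ g, coeFn_mulL2 (conjLinf φ) f, coeFn_conjLinf φ]
    with x h₁ h₂ h₃
  simp only [RCLike.inner_apply, h₁, h₂, h₃, Pi.mul_apply, map_mul, Complex.conj_conj]
  ring

theorem fourierCoeff_mulL2_fourierLp (φ : Linf) (m n : ℤ) :
    fourierCoeff (mulL2 φ (fourierLp 2 m)) n = fourierCoeff (toL2 φ) (n - m) := by
  have h : mulL2 φ (fourierLp 2 m) =ᵐ[muh] fun x => fourier m x * φ x := by
    filter_upwards [coeFn_mulL2 φ (fourierLp 2 m), coeFn_fourierLp 2 m] with x h₁ h₂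
    rw [h₁, Pi.mul_apply, h₂, mul_comm]
  rw [fourierCoeff_congr_ae h, fourierCoeff_congr_ae (coeFn_toL2 φ)]
  simp only [fourierCoeff, smul_eq_mul, ← mul_assoc, ← fourier_add]
  ring_nf

theorem fourierCoeff_mulL2 (φ : Linf) (g : L2) (n : ℤ) :
    fourierCoeff (mulL2 φ g) n = ∑' k : ℤ, fourierCoeff (toL2 φ) (n - k) * fourierCoeff g k := by
  rw [fourierCoeff_eq_inner, inner_mulL2_right, inner_eq_tsum_fourierCoeff]
  congr 1 with k
  rw [fourierCoeff_mulL2_fourierLp, fourierCoeff_toL2_conjLinf, Complex.conj_conj, neg_sub]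

theorem mulL2_mem_H2 {φ : Linf} {g : L2} (hφ : φ ∈ Hinf) (hg : g ∈ H2) : mulL2 φ g ∈ H2 := by
  refine mem_H2_iff.mpr fun n hn => ?_
  rw [fourierCoeff_mulL2, ← tsum_zero]
  congr 1 with k
  rcases lt_or_ge k 0 with hk | hk
  · rw [mem_H2_iff.mp hg k hk, mul_zero]
  · rw [mem_H2_iff.mp hφ (n - k) (by omega), zero_mul]

theorem fourierCoeff_mulL2_zero {φ : Linf} {g : L2} (hφ : φ ∈ Hinf) (hg : g ∈ H2) :
    fourierCoeff (mulL2 φ g) 0 = fourierCoeff (toL2 φ) 0 * fourierCoeff g 0 := by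
  rw [fourierCoeff_mulL2, tsum_eq_single 0 fun k hk => ?_, sub_zero]
  rcases lt_or_gt_of_ne hk with hk | hk
  · rw [mem_H2_iff.mp hg k hk, mul_zero]
  · rw [mem_H2_iff.mp hφ (0 - k) (by omega), zero_mul]

theorem IsConstLinf.mul_self {ω : Linf} (h : IsConstLinf ω) : IsConstLinf (ω * ω) := by
  obtain ⟨c, rfl⟩ := h
  refine ⟨c * c, Lp.ext ?_⟩
  filter_upwards [coeFn_mul_Linf (c • 1) (c • 1), Lp.coeFn_smul c (1 : Linf),
    Lp.coeFn_smul (c * c) (1 : Linf), coeFn_one_Linf] with x h₁ h₂ h₃ h₄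
  simp only [h₁, h₂, h₃, h₄, Pi.mul_apply, Pi.smul_apply, Pi.one_apply, smul_eq_mul, mul_one]

theorem conjLinf_mul_self_of_unimodular {ω : Linf} (hω : ∀ᵐ x ∂muh, ‖ω x‖ = 1) :
    conjLinf ω * ω = 1 := by
  refine Lp.ext ?_
  filter_upwards [coeFn_mul_Linf (conjLinf ω) ω, coeFn_conjLinf ω, coeFn_one_Linf, hω]
    with x h₁ h₂ h₃ h₄
  rw [h₁, h₃, Pi.mul_apply, h₂, Pi.one_apply, ← Complex.normSq_eq_conj_mul_self,
    Complex.normSq_eq_norm_sq, h₄, one_pow, Complex.ofReal_one]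

theorem inner_mulL2_mulL2_of_unimodular {ω : Linf} (hω : ∀ᵐ x ∂muh, ‖ω x‖ = 1) (f g : L2) :
    ⟪mulL2 ω f, mulL2 ω g⟫_ℂ = ⟪f, g⟫_ℂ := by
  rw [inner_mulL2_right, mulL2_eq_self_of_mul_eq_one (conjLinf_mul_self_of_unimodular hω)]

theorem norm_toL2_of_unimodular {ω : Linf} (hω : ∀ᵐ x ∂muh, ‖ω x‖ = 1) : ‖toL2 ω‖ = 1 := by
  have h : ∀ᵐ x ∂muh, ‖toL2 ω x‖ = ‖(1 : ℂ)‖ := by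
    filter_upwards [coeFn_toL2 ω, hω] with x h₁ h₂
    rw [h₁, h₂, norm_one]
  rw [Lp.norm_def, eLpNorm_congr_norm_ae h, eLpNorm_const _ two_ne_zero (NeZero.ne muh)]
  simp

theorem norm_fourierCoeff_zero_lt_one {ω : Linf} (hω : ∀ᵐ x ∂muh, ‖ω x‖ = 1)
    (hnc : ¬ IsConstLinf ω) : ‖fourierCoeff (toL2 ω) 0‖ < 1 := by
  have he : ‖(fourierLp 2 0 : L2)‖ = 1 := orthonormal_fourier.1 0
  have hle : ‖⟪(fourierLp 2 0 : L2), toL2 ω⟫_ℂ‖ ≤ ‖(fourierLp 2 0 : L2)‖ * ‖toL2 ω‖ :=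
    norm_inner_le_norm _ _
  rw [he, norm_toL2_of_unimodular hω, one_mul] at hle
  rw [fourierCoeff_eq_inner]
  refine hle.lt_of_ne fun heq => hnc ?_
  rcases ((norm_inner_eq_norm_tfae ℂ _ _).out 0 2).mp
    (by rw [heq, he, norm_toL2_of_unimodular hω, one_mul]) with h0 | ⟨r, hr⟩
  · simp [h0] at he
  · exact ⟨r, toL2_injective (by rw [hr, toL2_smul, toL2_one])⟩

open scoped NNReal in
theorem ContractingWith.mem_of_isFixedPt {α : Type*} [MetricSpace α] [CompleteSpace α]
    {K : ℝ≥0} {f : α → α} (hf : ContractingWith K f) {s : Set α} (hs : IsClosed s)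
    (hsf : Set.MapsTo f s s) (hne : s.Nonempty) {x : α} (hx : IsFixedPt f x) : x ∈ s := by
  obtain ⟨y, hy⟩ := hne
  have : Nonempty α := ⟨y⟩
  rw [hf.fixedPoint_unique hx]
  exact hs.mem_of_tendsto (hf.tendsto_iterate_fixedPoint y)
    (Eventually.of_forall fun n => hsf.iterate n hy)

section InvSub

variable {ω : Linf} {c : ℂ}

theorem sub_ne_zero_of_norm_le_one_lt {z : ℂ} (hz : ‖z‖ ≤ 1) (hc : 1 < ‖c‖) : z - c ≠ 0 :=
  fun h => by linarith [sub_eq_zero.mp h ▸ hz]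

theorem exists_ae_eq_inv_sub (hω : ∀ᵐ x ∂muh, ‖ω x‖ ≤ 1) (hc : 1 < ‖c‖) :
    ∃ w : Linf, w =ᵐ[muh] fun x => (ω x - c)⁻¹ := by
  have hmeas : AEStronglyMeasurable (fun x => (ω x - c)⁻¹) muh :=
    ((Lp.aestronglyMeasurable ω).aemeasurable.sub_const c).inv.aestronglyMeasurable
  have hbound : ∀ᵐ x ∂muh, ‖(ω x - c)⁻¹‖ ≤ (‖c‖ - 1)⁻¹ := by
    filter_upwards [hω] with x hx
    rw [norm_inv]
    refine inv_anti₀ (by linarith) ?_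
    calc ‖c‖ - 1 ≤ ‖c‖ - ‖ω x‖ := by linarith
      _ ≤ ‖ω x - c‖ := by rw [norm_sub_rev]; exact norm_sub_norm_le c (ω x)
  exact ⟨_, (memLp_top_of_bound hmeas _ hbound).coeFn_toLp⟩

theorem sub_smul_one_mul_eq_one {w : Linf} (hω : ∀ᵐ x ∂muh, ‖ω x‖ ≤ 1) (hc : 1 < ‖c‖)
    (hw : w =ᵐ[muh] fun x => (ω x - c)⁻¹) : (ω - c • 1) * w = 1 := by
  refine Lp.ext ?_
  filter_upwards [coeFn_mul_Linf (ω - c • 1) w, Lp.coeFn_sub ω (c • 1), Lp.coeFn_smul c (1 : Linf),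
    coeFn_one_Linf, hw, hω] with x h₁ h₂ h₃ h₄ h₅ h₆
  simp only [h₁, h₂, h₃, h₄, h₅, Pi.mul_apply, Pi.sub_apply, Pi.smul_apply, Pi.one_apply,
    smul_eq_mul, mul_one]
  exact mul_inv_cancel₀ (sub_ne_zero_of_norm_le_one_lt h₆ hc)

theorem mem_Hinf_of_ae_eq_inv_sub {w : Linf} (hωH : ω ∈ Hinf) (hω : ∀ᵐ x ∂muh, ‖ω x‖ ≤ 1)
    (hc : 1 < ‖c‖) (hw : w =ᵐ[muh] fun x => (ω x - c)⁻¹) : w ∈ Hinf := by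
  set f : L2 → L2 := fun h => c⁻¹ • (Mmul ω h - toL2 1)
  have hc0 : c ≠ 0 := norm_pos_iff.mp (zero_lt_one.trans hc)
  have hωnorm : ‖ω‖ ≤ 1 := by simpa using Lp.norm_le_of_ae_bound zero_le_one hω
  have hcontr : ContractingWith ‖c‖₊⁻¹ f := by
    refine ⟨by rw [inv_lt_one₀ (nnnorm_pos.mpr hc0)]; exact_mod_cast hc,
      LipschitzWith.of_dist_le_mul fun h g => ?_⟩
    calc dist (f h) (f g) = ‖c‖⁻¹ * ‖mulL2 ω (h - g)‖ := by
          rw [dist_eq_norm, ← smul_sub, sub_sub_sub_cancel_right, ← map_sub, norm_smul,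
            norm_inv]
          rfl
      _ ≤ ‖c‖⁻¹ * (‖ω‖ * ‖h - g‖) := by gcongr; exact mulL2_norm ω _
      _ ≤ ‖c‖⁻¹ * dist h g := by
          rw [dist_eq_norm]; gcongr; exact mul_le_of_le_one_left (norm_nonneg _) hωnorm
      _ = _ := by simp
  have hmaps : Set.MapsTo f H2 H2 := fun h hh =>
    smul_mem _ _ (sub_mem (mulL2_mem_H2 hωH hh) one_mem_Hinf)
  have hfix : IsFixedPt f (toL2 w) := by
    change c⁻¹ • (mulL2 ω (toL2 w) - toL2 1) = toL2 w
    refine Lp.ext ?_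
    filter_upwards [Lp.coeFn_smul c⁻¹ (mulL2 ω (toL2 w) - toL2 1),
      Lp.coeFn_sub (mulL2 ω (toL2 w)) (toL2 1), coeFn_mulL2 ω (toL2 w), coeFn_toL2 w,
      coeFn_toL2 1, coeFn_one_Linf, hw, hω] with x h₁ h₂ h₃ h₄ h₅ h₆ h₇ h₈
    have hne := sub_ne_zero_of_norm_le_one_lt h₈ hc
    simp only [h₁, h₂, Pi.smul_apply, Pi.sub_apply, h₃, Pi.mul_apply, h₄, h₅, h₆, h₇,
      Pi.one_apply, smul_eq_mul]
    field_simp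
    ring
  exact hcontr.mem_of_isFixedPt isClosed_H2 hmaps ⟨0, zero_mem _⟩ hfix

end InvSub

theorem isOuter_toL2_of_mul_eq_one {u w : Linf} (hu : u ∈ Hinf) (hw : w ∈ Hinf)
    (huw : u * w = 1) : IsOuter (toL2 u) := by
  refine le_antisymm (topologicalClosure_minimal _ ?_ isClosed_H2) fun f hf => ?_
  · rw [span_le]
    rintro _ ⟨n, rfl⟩
    exact mulL2_mem_H2 (fourierLp_top_mem_Hinf n) hu
  · have hmap : H2.map (Mmul u : L2 →ₗ[ℂ] L2) ≤
        (span ℂ (Set.range fun n : ℕ => mulL2 (fourierLp ⊤ (n : ℤ)) (toL2 u))).topologicalClosure :=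
      (topologicalClosure_map (Mmul u) _).trans <| topologicalClosure_mono <| by
        rw [map_span, ← Set.range_comp]
        exact span_mono fun _ ⟨n, hn⟩ => ⟨n, hn ▸ (mulL2_fourierLp u n).symm⟩
    rw [← mulL2_eq_self_of_mul_eq_one huw f]
    exact hmap (mem_map_of_mem (mulL2_mem_H2 hw hf))

theorem sub_smul_toL2_one_mem_modelSpace {ω : Linf} (hω : IsInner ω) {α : ℂ}
    (hα : fourierCoeff (toL2 ω) 0 = conj α) :
    toL2 ω - α⁻¹ • toL2 1 ∈ ModelSpace (ω * ω) := by
  refine mem_inf.mpr ⟨sub_mem hω.1 (smul_mem _ _ one_mem_Hinf), ?_⟩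
  rw [mem_orthogonal]
  rintro _ ⟨g, hg, rfl⟩
  have hωg : mulL2 ω g ∈ H2 := mulL2_mem_H2 hω.1 hg
  have h₁ : ⟪Mmul (ω * ω) g, toL2 ω⟫_ℂ = α * conj (fourierCoeff g 0) := by
    rw [← mulL2_toL2_one ω]
    change ⟪mulL2 (ω * ω) g, _⟫_ℂ = _
    rw [mulL2_mul, inner_mulL2_mulL2_of_unimodular hω.2, inner_toL2_one,
      fourierCoeff_mulL2_zero hω.1 hg, hα, map_mul, Complex.conj_conj]
  have h₂ : ⟪Mmul (ω * ω) g, toL2 1⟫_ℂ = α ^ 2 * conj (fourierCoeff g 0) := by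
    change ⟪mulL2 (ω * ω) g, _⟫_ℂ = _
    rw [mulL2_mul, inner_toL2_one, fourierCoeff_mulL2_zero hω.1 hωg,
      fourierCoeff_mulL2_zero hω.1 hg, hα]
    simp only [map_mul, Complex.conj_conj]
    ring
  rw [ContinuousLinearMap.coe_coe, inner_sub_right, inner_smul_right, h₁, h₂]
  rcases eq_or_ne α 0 with rfl | hα0
  · simp
  · field_simp
    ring

theorem evalDisk_zero (f : L2) : evalDisk f 0 = fourierCoeff f 0 := by
  rw [evalDisk, tsum_eq_single 0 fun k hk => by rw [zero_pow hk, mul_zero]]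
  simp

theorem singular_inner_sqrt_shift_outer_general
    (θ₀ ω : Linf) (hnc : ¬ IsConstLinf θ₀) (hω : IsInner ω)
    (hsq : ω * ω = θ₀)
    (hnozero : ∀ z : ℂ, ‖z‖ < 1 → evalDisk (toL2 ω) z ≠ 0)
    (α : ℂ) (hα : α = (starRingEnd ℂ) (evalDisk (toL2 ω) 0)) :
    0 < ‖α‖ ∧ ‖α‖ < 1 ∧
      (toL2 ω - α⁻¹ • toL2 (1 : Linf)) ∈ ModelSpace θ₀ ∧
      IsOuter (toL2 ω - α⁻¹ • toL2 (1 : Linf)) ∧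
      InvertibleHinf (toL2 ω - α⁻¹ • toL2 (1 : Linf)) := by
  subst hsq
  rw [evalDisk_zero] at hα
  have hcoeff : fourierCoeff (toL2 ω) 0 = conj α := by rw [hα, Complex.conj_conj]
  have hα0 : α ≠ 0 := by simpa [hα, evalDisk_zero] using hnozero 0 (by simp)
  have hα1 : ‖α‖ < 1 := by
    simpa [hcoeff] using norm_fourierCoeff_zero_lt_one hω.2 (mt IsConstLinf.mul_self hnc)
  have hc : 1 < ‖α⁻¹‖ := by rw [norm_inv]; exact one_lt_inv₀ (norm_pos_iff.mpr hα0) |>.mpr hα1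
  have hω₁ : ∀ᵐ x ∂muh, ‖ω x‖ ≤ 1 := hω.2.mono fun _ h => h.le
  obtain ⟨w, hw⟩ := exists_ae_eq_inv_sub hω₁ hc
  have hmodel := sub_smul_toL2_one_mem_modelSpace hω hcoeff
  rw [← toL2_smul, ← toL2_sub] at hmodel ⊢
  have hu : ω - α⁻¹ • 1 ∈ Hinf := (mem_inf.mp hmodel).1
  have hwH : w ∈ Hinf := mem_Hinf_of_ae_eq_inv_sub hω.1 hω₁ hc hw
  have hinv : (ω - α⁻¹ • 1) * w = 1 := sub_smul_one_mul_eq_one hω₁ hc hw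
  exact ⟨norm_pos_iff.mpr hα0, hα1, hmodel, isOuter_toL2_of_mul_eq_one hu hwH hinv,
    ⟨_, w, rfl, hu, hwH, hinv⟩⟩

/-- if `θ₀` is a nonconstant singular inner function (inner, with no zeros in the
disk), `ω` is the singular inner function with `ω² = θ₀`, and `α = conj (ω(0))`, then
`0 < |α| < 1`, and `ω − 1/α` belongs to the model space `H² ⊖ θ₀H²`, is outer, and is
invertible in `H^∞`. -/
theorem singular_inner_sqrt_shift_outer
    (θ₀ ω : Linf) (hθ : IsInner θ₀) (hnc : ¬ IsConstLinf θ₀) (hω : IsInner ω)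
    (hsq : ω * ω = θ₀)
    (hnozero : ∀ z : ℂ, ‖z‖ < 1 → evalDisk (toL2 ω) z ≠ 0)
    (α : ℂ) (hα : α = (starRingEnd ℂ) (evalDisk (toL2 ω) 0)) :
    0 < ‖α‖ ∧ ‖α‖ < 1 ∧
      (toL2 ω - α⁻¹ • toL2 (1 : Linf)) ∈ ModelSpace θ₀ ∧
      IsOuter (toL2 ω - α⁻¹ • toL2 (1 : Linf)) ∧
      InvertibleHinf (toL2 ω - α⁻¹ • toL2 (1 : Linf)) :=
  singular_inner_sqrt_shift_outer_general θ₀ ω hnc hω hsq hnozero α hα
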